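/- Let 0 < a < b ≤ 1, 0 < s < 1, and q > 1. Then |A(a^s, b^s) − L(a^s, b^s)| ≤ (s(b−a)/(L(a,b) · G(a,b)^{2(s−1)²})) · ((q−1)/(2q−1))^{1−1/q} · L(a^{(s²−s+1)q}, b^{(s²−s+1)q})^{1/q}. -/

import Mathlib

/-!
Since `a ^ s ≤ L(a ^ s, b ^ s) ≤ b ^ s`, the left side is at most `(b ^ s - a ^ s) / 2`, which is
`(log b ^ s - log a ^ s) · L(a ^ s, b ^ s) / 2`. Jensen's inequality gives
`L(u, v) ≤ L(u ^ q, v ^ q) ^ (1 / q)`, and comparing the integrands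
`a ^ k x ^ (m - 1) ≤ x ^ (m + k - 1)` on `[a, b]` gives
`a ^ k L(a ^ m, b ^ m) ≤ L(a ^ (m + k), b ^ (m + k))`; with `m = s q` and `k = (s - 1) ^ 2 q`
this produces the last factor. The remaining factors only help: `b ^ ((s - 1) ^ 2) ≤ 1`, and
`((q - 1) / (2 q - 1)) ^ (1 - 1 / q) ≥ 1 / 2` by Bernoulli's inequality.
-/

open Real

/-- Arithmetic mean. -/
noncomputable def Amean (x y : ℝ) : ℝ := (x + y) / 2

/-- Geometric mean. -/
noncomputable def Gmean (x y : ℝ) : ℝ := Real.sqrt (x * y)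

/-- Logarithmic mean. -/
noncomputable def Lmean (x y : ℝ) : ℝ := (y - x) / (Real.log y - Real.log x)

open Set

theorem sub_le_sub_of_hasDerivAt_le {f g f' g' : ℝ → ℝ} {a b : ℝ} (hab : a ≤ b)
    (hf : ∀ x ∈ Icc a b, HasDerivAt f (f' x) x) (hg : ∀ x ∈ Icc a b, HasDerivAt g (g' x) x)
    (hle : ∀ x ∈ Icc a b, f' x ≤ g' x) : f b - f a ≤ g b - g a := by
  have hmono : MonotoneOn (g - f) (Icc a b) :=
    monotoneOn_of_hasDerivWithinAt_nonneg (convex_Icc a b)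
      (fun x hx ↦ ((hg x hx).sub (hf x hx)).continuousAt.continuousWithinAt)
      (fun x hx ↦ ((hg x (interior_subset hx)).sub (hf x (interior_subset hx))).hasDerivWithinAt)
      (fun x hx ↦ sub_nonneg.2 (hle x (interior_subset hx)))
  have := hmono (left_mem_Icc.2 hab) (right_mem_Icc.2 hab) hab
  simp only [Pi.sub_apply] at this
  linarith

theorem Lmean_rpow {a b : ℝ} (ha : 0 < a) (hb : 0 < b) (r : ℝ) :
    Lmean (a ^ r) (b ^ r) = (b ^ r - a ^ r) / (r * (log b - log a)) := by
  rw [Lmean, log_rpow ha, log_rpow hb, ← mul_sub]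

theorem sub_div_Lmean {a b : ℝ} (hab : a ≠ b) : (b - a) / Lmean a b = log b - log a :=
  div_div_cancel₀ (sub_ne_zero.2 hab.symm)

theorem Gmean_rpow_two_mul {a b : ℝ} (ha : 0 ≤ a) (hb : 0 ≤ b) (t : ℝ) :
    Gmean a b ^ (2 * t) = a ^ t * b ^ t := by
  rw [Gmean, sqrt_eq_rpow, ← rpow_mul (mul_nonneg ha hb), show 1 / 2 * (2 * t) = t by ring,
    mul_rpow ha hb]

theorem le_Lmean {u v : ℝ} (hu : 0 < u) (huv : u < v) : u ≤ Lmean u v := by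
  have hv : 0 < v := hu.trans huv
  have hlog := log_le_sub_one_of_pos (div_pos hv hu)
  rw [log_div hv.ne' hu.ne'] at hlog
  rw [Lmean, le_div_iff₀ (sub_pos.2 (log_lt_log hu huv))]
  calc u * (log v - log u) ≤ u * (v / u - 1) := mul_le_mul_of_nonneg_left hlog hu.le
    _ = v - u := by field_simp

theorem Lmean_le {u v : ℝ} (hu : 0 < u) (huv : u < v) : Lmean u v ≤ v := by
  have hv : 0 < v := hu.trans huv
  have hlog := one_sub_inv_le_log_of_pos (div_pos hv hu)
  rw [log_div hv.ne' hu.ne', inv_div] at hlog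
  rw [Lmean, div_le_iff₀ (sub_pos.2 (log_lt_log hu huv))]
  calc v - u = v * (1 - u / v) := by field_simp
    _ ≤ v * (log v - log u) := mul_le_mul_of_nonneg_left hlog hv.le

theorem abs_Amean_sub_Lmean_le {u v : ℝ} (hu : 0 < u) (huv : u < v) :
    |Amean u v - Lmean u v| ≤ (v - u) / 2 := by
  have h₁ := le_Lmean hu huv
  have h₂ := Lmean_le hu huv
  rw [Amean, abs_le]
  constructor <;> linarith

theorem rpow_mul_Lmean_rpow_le {a b m k : ℝ} (ha : 0 < a) (hab : a ≤ b) (hm : 0 < m)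
    (hk : 0 ≤ k) : a ^ k * Lmean (a ^ m) (b ^ m) ≤ Lmean (a ^ (m + k)) (b ^ (m + k)) := by
  have hb : 0 < b := ha.trans_le hab
  have hmk : 0 < m + k := by linarith
  have hprimitives : a ^ k * (b ^ m / m) - a ^ k * (a ^ m / m)
      ≤ b ^ (m + k) / (m + k) - a ^ (m + k) / (m + k) :=
    sub_le_sub_of_hasDerivAt_le hab
      (f' := fun x ↦ a ^ k * (m * x ^ (m - 1) / m))
      (g' := fun x ↦ (m + k) * x ^ (m + k - 1) / (m + k))
      (fun x hx ↦
        ((hasDerivAt_rpow_const (Or.inl (ha.trans_le hx.1).ne')).div_const m).const_mul _)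
      (fun x hx ↦ (hasDerivAt_rpow_const (Or.inl (ha.trans_le hx.1).ne')).div_const _)
      (fun x hx ↦ by
        have hx0 : 0 < x := ha.trans_le hx.1
        rw [mul_div_cancel_left₀ _ hm.ne', mul_div_cancel_left₀ _ hmk.ne', add_sub_right_comm,
          rpow_add hx0, mul_comm]
        exact mul_le_mul_of_nonneg_left (rpow_le_rpow ha.le hx.1 hk) (rpow_nonneg hx0.le _))
  rw [Lmean_rpow ha hb, Lmean_rpow ha hb, ← div_div, ← div_div, ← mul_div_assoc]
  gcongr
  · exact sub_nonneg.2 (log_le_log ha hab)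
  · calc a ^ k * ((b ^ m - a ^ m) / m) = a ^ k * (b ^ m / m) - a ^ k * (a ^ m / m) := by ring
      _ ≤ b ^ (m + k) / (m + k) - a ^ (m + k) / (m + k) := hprimitives
      _ = (b ^ (m + k) - a ^ (m + k)) / (m + k) := by ring

/-- Jensen's inequality for the probability measure `dx / (x (log v - log u))` on `[u, v]`, under
which `x` has mean `Lmean u v` and `x ^ q` has mean `Lmean (u ^ q) (v ^ q)`. -/
theorem Lmean_le_Lmean_rpow_rpow {u v q : ℝ} (hu : 0 < u) (huv : u < v) (hq : 1 ≤ q) :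
    Lmean u v ≤ Lmean (u ^ q) (v ^ q) ^ (1 / q) := by
  have hv : 0 < v := hu.trans huv
  have hq0 : 0 < q := one_pos.trans_le hq
  set Y := log v - log u with hY
  have hY0 : 0 < Y := sub_pos.2 (log_lt_log hu huv)
  set M := Lmean (u ^ q) (v ^ q) with hM
  have hM0 : 0 < M :=
    (rpow_pos_of_pos hu q).trans_le (le_Lmean (rpow_pos_of_pos hu q) (rpow_lt_rpow hu.le huv hq0))
  have hsum : v ^ q - u ^ q = q * Y * M := by
    rw [hM, Lmean_rpow hu hv, ← hY]
    field_simp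
  -- tangent line of the concave map z ↦ z ^ (1 / q) at z = 1, evaluated at z = x ^ q / M
  have htangent : ∀ x > 0, x ≤ M ^ (1 / q) * (x ^ q / (q * M) + (1 - 1 / q)) := by
    intro x hx
    have h := rpow_one_add_le_one_add_mul_self (s := x ^ q / M - 1) (p := 1 / q)
      (by linarith [div_pos (rpow_pos_of_pos hx q) hM0]) (by positivity)
      (div_le_one_of_le₀ hq hq0.le)
    rw [add_sub_cancel, div_rpow (rpow_nonneg hx.le _) hM0.le, ← rpow_mul hx.le,
      mul_one_div_cancel hq0.ne', rpow_one, div_le_iff₀ (rpow_pos_of_pos hM0 _)] at h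
    calc x ≤ (1 + 1 / q * (x ^ q / M - 1)) * M ^ (1 / q) := h
      _ = _ := by field_simp; ring
  have hmain := sub_le_sub_of_hasDerivAt_le huv.le (f := id) (f' := fun _ ↦ 1)
    (g := fun x ↦ M ^ (1 / q) * (x ^ q / (q ^ 2 * M) + (1 - 1 / q) * log x))
    (g' := fun x ↦ M ^ (1 / q) * (q * x ^ (q - 1) / (q ^ 2 * M) + (1 - 1 / q) * x⁻¹))
    (fun x _ ↦ hasDerivAt_id x)
    (fun x hx ↦ (((hasDerivAt_rpow_const (Or.inl (hu.trans_le hx.1).ne')).div_const _).add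
      ((hasDerivAt_log (hu.trans_le hx.1).ne').const_mul _)).const_mul _)
    (fun x hx ↦ by
      have hx0 : 0 < x := hu.trans_le hx.1
      rw [rpow_sub_one hx0.ne']
      calc 1 = x / x := (div_self hx0.ne').symm
        _ ≤ M ^ (1 / q) * (x ^ q / (q * M) + (1 - 1 / q)) / x :=
          div_le_div_of_nonneg_right (htangent x hx0) hx0.le
        _ = _ := by field_simp)
  rw [Lmean, ← hY, div_le_iff₀ hY0]
  calc v - u ≤ M ^ (1 / q) * ((v ^ q - u ^ q) / (q ^ 2 * M) + (1 - 1 / q) * Y) := by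
        convert hmain using 1; simp only [id]; ring
    _ = M ^ (1 / q) * Y := by rw [hsum]; field_simp; ring

theorem inv_two_le_sub_one_div_rpow {q : ℝ} (hq : 1 < q) :
    2⁻¹ ≤ ((q - 1) / (2 * q - 1)) ^ (1 - 1 / q) := by
  have hq0 : 0 < q := one_pos.trans hq
  set t := 1 - 1 / q with ht
  have ht0 : 0 < t := by rw [ht, sub_pos, div_lt_one hq0]; exact hq
  have ht1 : t ≤ 1 := by rw [ht, sub_le_self_iff]; positivity
  have hfrac : (q - 1) / (2 * q - 1) = (1 + t⁻¹)⁻¹ := by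
    have : q - 1 ≠ 0 := by linarith
    have : 2 * q - 1 ≠ 0 := by linarith
    rw [ht]; field_simp; ring
  have hbernoulli : (1 + t⁻¹) ^ t ≤ 2 := by
    have := rpow_one_add_le_one_add_mul_self (s := t⁻¹) (by linarith [inv_pos.2 ht0]) ht0.le ht1
    rwa [mul_inv_cancel₀ ht0.ne', one_add_one_eq_two] at this
  rw [hfrac, inv_rpow (by positivity)]
  exact inv_anti₀ (by positivity) hbernoulli
theorem rpow_mul_Lmean_rpow_mul_rpow_le {a b m k q : ℝ} (ha : 0 < a) (hab : a < b)
    (hm : 0 < m) (hk : 0 ≤ k) (hq : 0 < q) :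
    a ^ k * Lmean (a ^ (m * q)) (b ^ (m * q)) ^ (1 / q)
      ≤ Lmean (a ^ ((m + k) * q)) (b ^ ((m + k) * q)) ^ (1 / q) := by
  have hL : 0 < Lmean (a ^ (m * q)) (b ^ (m * q)) :=
    (rpow_pos_of_pos ha _).trans_le
      (le_Lmean (rpow_pos_of_pos ha _) (rpow_lt_rpow ha.le hab (by positivity)))
  have h := rpow_mul_Lmean_rpow_le ha hab.le (m := m * q) (k := k * q) (by positivity)
    (by positivity)
  calc a ^ k * Lmean (a ^ (m * q)) (b ^ (m * q)) ^ (1 / q)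
      = (a ^ (k * q) * Lmean (a ^ (m * q)) (b ^ (m * q))) ^ (1 / q) := by
        rw [mul_rpow (by positivity) hL.le, ← rpow_mul ha.le,
          show k * q * (1 / q) = k by field_simp]
    _ ≤ Lmean (a ^ ((m + k) * q)) (b ^ ((m + k) * q)) ^ (1 / q) := by
        rw [add_mul]
        exact rpow_le_rpow (by positivity) h (by positivity)

theorem stmt_19_general (a b s q : ℝ) (ha : 0 < a) (hab : a < b) (hb : b ≤ 1)
    (hs0 : 0 < s) (hq : 1 < q) :
    |Amean (a ^ s) (b ^ s) - Lmean (a ^ s) (b ^ s)| ≤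
      (s * (b - a) / (Lmean a b * Gmean a b ^ (2 * (s - 1) ^ 2))) *
        ((q - 1) / (2 * q - 1)) ^ (1 - 1 / q) *
        (Lmean (a ^ ((s ^ 2 - s + 1) * q)) (b ^ ((s ^ 2 - s + 1) * q))) ^ (1 / q) := by
  have hb0 : 0 < b := ha.trans hab
  have hq0 : 0 < q := one_pos.trans hq
  have hlt : a ^ s < b ^ s := rpow_lt_rpow ha.le hab hs0
  set e := (s - 1) ^ 2
  set Y := log (b ^ s) - log (a ^ s) with hY
  have hY0 : 0 < Y := sub_pos.2 (log_lt_log (rpow_pos_of_pos ha s) hlt)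
  have hfactor : s * (b - a) / (Lmean a b * Gmean a b ^ (2 * e)) = Y / (a ^ e * b ^ e) := by
    rw [Gmean_rpow_two_mul ha.le hb0.le, ← div_div, mul_div_assoc, sub_div_Lmean hab.ne, hY,
      log_rpow ha, log_rpow hb0, mul_sub]
  have hL : 0 ≤ Lmean (a ^ (s * q)) (b ^ (s * q)) ^ (1 / q) :=
    rpow_nonneg ((rpow_pos_of_pos ha _).le.trans
      (le_Lmean (rpow_pos_of_pos ha _) (rpow_lt_rpow ha.le hab (by positivity)))) _
  have hC := inv_two_le_sub_one_div_rpow hq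
  rw [hfactor, show (s ^ 2 - s + 1) * q = (s + e) * q by ring]
  calc |Amean (a ^ s) (b ^ s) - Lmean (a ^ s) (b ^ s)|
      ≤ (b ^ s - a ^ s) / 2 := abs_Amean_sub_Lmean_le (rpow_pos_of_pos ha s) hlt
    _ = Y * Lmean (a ^ s) (b ^ s) / 2 := by rw [Lmean, ← hY]; field_simp
    _ ≤ Y * Lmean (a ^ (s * q)) (b ^ (s * q)) ^ (1 / q) / 2 := by
        rw [rpow_mul ha.le, rpow_mul hb0.le]
        gcongr
        exact Lmean_le_Lmean_rpow_rpow (rpow_pos_of_pos ha s) hlt hq.le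
    _ ≤ Y * Lmean (a ^ (s * q)) (b ^ (s * q)) ^ (1 / q) / 2 / b ^ e :=
        le_div_self (by positivity) (rpow_pos_of_pos hb0 e) (rpow_le_one hb0.le hb (sq_nonneg _))
    _ = Y / (a ^ e * b ^ e) * 2⁻¹ * (a ^ e * Lmean (a ^ (s * q)) (b ^ (s * q)) ^ (1 / q)) := by
        field_simp
    _ ≤ _ := by
        gcongr
        exact rpow_mul_Lmean_rpow_mul_rpow_le ha hab hs0 (sq_nonneg _) hq0

theorem stmt_19 (a b s q : ℝ) (ha : 0 < a) (hab : a < b) (hb : b ≤ 1)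
    (hs0 : 0 < s) (hs1 : s < 1) (hq : 1 < q) :
    |Amean (a ^ s) (b ^ s) - Lmean (a ^ s) (b ^ s)| ≤
      (s * (b - a) / (Lmean a b * Gmean a b ^ (2 * (s - 1) ^ 2))) *
        ((q - 1) / (2 * q - 1)) ^ (1 - 1 / q) *
        (Lmean (a ^ ((s ^ 2 - s + 1) * q)) (b ^ ((s ^ 2 - s + 1) * q))) ^ (1 / q) :=
  stmt_19_general a b s q ha hab hb hs0 hq
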